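/- arXiv:2107.05253 — 6 statements merged into one kernel-verified Lean document; each statement's English description precedes it below -/
import Mathlib

section
/- Every predicate-free symbolic configuration is precise on the set of all configurations: if φ is a separated conjunction of component atoms x@q, interaction atoms ⟨x₁.p₁, x₂.p₂⟩ and (dis)equalities between variables, then for every configuration γ there is at most one substructure γ' ⊑ γ such that γ' ⊨ φ. -/
/-- A configuration `(C, I, ρ, ν)`: a finite set of components `C ⊆ ℕ`,
a finite set of interactions `I` (quadruples component-port-component-port),
a state map `ρ` defined exactly on `C`, and a store `ν : Var → 𝔠`. -/
structure Config (Q P : Type) where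
  C : Finset ℕ
  I : Finset (ℕ × P × ℕ × P)
  ρ : ℕ → Option Q
  ν : ℕ → ℕ
  dom : ∀ c, (ρ c).isSome ↔ c ∈ C

namespace Config

variable {Q P : Type} [DecidableEq P]

/-- The composition `γ₁ • γ₂` is defined iff the stores agree and the
component and interaction sets are disjoint. -/
def Defined (γ₁ γ₂ : Config Q P) : Prop :=
  γ₁.ν = γ₂.ν ∧ Disjoint γ₁.C γ₂.C ∧ Disjoint γ₁.I γ₂.I

/-- Composition: union of components, interactions and state maps. -/
def comp (γ₁ γ₂ : Config Q P) : Config Q P where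
  C := γ₁.C ∪ γ₂.C
  I := γ₁.I ∪ γ₂.I
  ρ := fun c => if c ∈ γ₁.C then γ₁.ρ c else γ₂.ρ c
  ν := γ₁.ν
  dom := by
    intro c
    by_cases h : c ∈ γ₁.C <;> simp [h, γ₁.dom, γ₂.dom]

/-- The substructure relation: `γ' ⊑ γ` iff `γ = γ' • γ''` for some `γ''`. -/
def Sub (γ' γ : Config Q P) : Prop := ∃ γ'', Defined γ' γ'' ∧ γ = comp γ' γ''

end Config

open Config

/-- Predicate-free symbolic configurations: separated conjunctions of component
atoms `x@q`, interaction atoms `⟨x₁.p₁, x₂.p₂⟩` and (dis)equalities. -/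
inductive PF (Q P : Type) where
  | compAtom (x : ℕ) (q : Q)
  | interAtom (x₁ : ℕ) (p₁ : P) (x₂ : ℕ) (p₂ : P)
  | eqAtom (x y : ℕ)
  | neqAtom (x y : ℕ)
  | sep (φ₁ φ₂ : PF Q P)

variable {Q P : Type} [DecidableEq P]

/-- Satisfaction for predicate-free symbolic configurations. -/
def PF.sat : PF Q P → Config Q P → Prop
  | .compAtom x q, γ => γ.C = {γ.ν x} ∧ γ.I = ∅ ∧ γ.ρ (γ.ν x) = some q
  | .interAtom x₁ p₁ x₂ p₂, γ => γ.C = ∅ ∧ γ.I = {(γ.ν x₁, p₁, γ.ν x₂, p₂)}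
  | .eqAtom x y, γ => γ.C = ∅ ∧ γ.I = ∅ ∧ γ.ν x = γ.ν y
  | .neqAtom x y, γ => γ.C = ∅ ∧ γ.I = ∅ ∧ γ.ν x ≠ γ.ν y
  | .sep φ₁ φ₂, γ =>
      ∃ γ₁ γ₂, Defined γ₁ γ₂ ∧ γ = comp γ₁ γ₂ ∧ φ₁.sat γ₁ ∧ φ₂.sat γ₂

theorem Config.ext' {γ₁ γ₂ : Config Q P} (hC : γ₁.C = γ₂.C) (hI : γ₁.I = γ₂.I)
    (hρ : γ₁.ρ = γ₂.ρ) (hν : γ₁.ν = γ₂.ν) : γ₁ = γ₂ := by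
  cases γ₁; cases γ₂; simp_all

theorem sub_nu {γ' γ : Config Q P} (h : Sub γ' γ) : γ'.ν = γ.ν := by
  obtain ⟨γ'', _, rfl⟩ := h; rfl

theorem sub_rho {γ' γ : Config Q P} (h : Sub γ' γ) :
    ∀ c ∈ γ'.C, γ'.ρ c = γ.ρ c := by
  obtain ⟨γ'', _, rfl⟩ := h
  intro c hc
  simp [comp, hc]

theorem sub_eq {γ' γ'' γ : Config Q P} (h' : Sub γ' γ) (h'' : Sub γ'' γ)
    (hC : γ'.C = γ''.C) (hI : γ'.I = γ''.I) : γ' = γ'' := by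
  refine Config.ext' hC hI ?_ ((sub_nu h').trans (sub_nu h'').symm)
  funext c
  by_cases hc : c ∈ γ'.C
  · rw [sub_rho h' c hc, sub_rho h'' c (hC ▸ hc)]
  · have h1 : γ'.ρ c = none := by
      cases hh : γ'.ρ c with
      | none => rfl
      | some q => exact absurd ((γ'.dom c).mp (by simp [hh])) hc
    have h2 : γ''.ρ c = none := by
      cases hh : γ''.ρ c with
      | none => rfl
      | some q => exact absurd ((γ''.dom c).mp (by simp [hh])) (hC ▸ hc)
    rw [h1, h2]

theorem sub_trans {γ₁ γ₂ γ₃ : Config Q P} (h12 : Sub γ₁ γ₂) (h23 : Sub γ₂ γ₃) :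
    Sub γ₁ γ₃ := by
  obtain ⟨δ, ⟨hν, hC, hI⟩, rfl⟩ := h12
  obtain ⟨ε, ⟨hν', hC', hI'⟩, rfl⟩ := h23
  simp only [comp, Finset.disjoint_union_left] at hC' hI' hν'
  refine ⟨comp δ ε, ⟨?_, ?_, ?_⟩, ?_⟩
  · simpa [comp] using hν
  · simpa [comp, Finset.disjoint_union_right] using ⟨hC, hC'.1⟩
  · simpa [comp, Finset.disjoint_union_right] using ⟨hI, hI'.1⟩
  · refine Config.ext' ?_ ?_ ?_ rfl
    · simp [comp, Finset.union_assoc]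
    · simp [comp, Finset.union_assoc]
    · funext c
      by_cases h1 : c ∈ γ₁.C <;> by_cases h2 : c ∈ δ.C <;> simp [comp, h1, h2]

theorem sub_left {γ₁ γ₂ : Config Q P} (h : Defined γ₁ γ₂) : Sub γ₁ (comp γ₁ γ₂) :=
  ⟨γ₂, h, rfl⟩

theorem sub_right {γ₁ γ₂ : Config Q P} (h : Defined γ₁ γ₂) : Sub γ₂ (comp γ₁ γ₂) := by
  obtain ⟨hν, hC, hI⟩ := h
  refine ⟨γ₁, ⟨hν.symm, hC.symm, hI.symm⟩, ?_⟩
  refine Config.ext' ?_ ?_ ?_ ?_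
  · simp [comp, Finset.union_comm]
  · simp [comp, Finset.union_comm]
  · funext c
    by_cases h1 : c ∈ γ₁.C <;> by_cases h2 : c ∈ γ₂.C <;> simp [comp, h1, h2]
    · exact absurd (hC.forall_ne_finset h1 h2) (by simp)
    · have := (γ₁.dom c).not.mpr h1
      have := (γ₂.dom c).not.mpr h2
      cases hh1 : γ₁.ρ c <;> cases hh2 : γ₂.ρ c <;> simp_all
  · exact hν

theorem pf_precise (φ : PF Q P) (γ : Config Q P) :
    ∀ γ' γ'' : Config Q P, Sub γ' γ → Sub γ'' γ →
      φ.sat γ' → φ.sat γ'' → γ' = γ'' := by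
  induction φ generalizing γ with
  | compAtom x q =>
    intro γ' γ'' h' h'' s' s''
    exact sub_eq h' h'' (by rw [s'.1, s''.1, sub_nu h', sub_nu h''])
      (by rw [s'.2.1, s''.2.1])
  | interAtom x₁ p₁ x₂ p₂ =>
    intro γ' γ'' h' h'' s' s''
    exact sub_eq h' h'' (by rw [s'.1, s''.1])
      (by rw [s'.2, s''.2, sub_nu h', sub_nu h''])
  | eqAtom x y =>
    intro γ' γ'' h' h'' s' s''
    exact sub_eq h' h'' (by rw [s'.1, s''.1]) (by rw [s'.2.1, s''.2.1])
  | neqAtom x y =>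
    intro γ' γ'' h' h'' s' s''
    exact sub_eq h' h'' (by rw [s'.1, s''.1]) (by rw [s'.2.1, s''.2.1])
  | sep φ₁ φ₂ ih₁ ih₂ =>
    intro γ' γ'' h' h'' s' s''
    obtain ⟨a₁, a₂, hd, rfl, sa₁, sa₂⟩ := s'
    obtain ⟨b₁, b₂, hd', rfl, sb₁, sb₂⟩ := s''
    have e1 := ih₁ γ a₁ b₁ (sub_trans (sub_left hd) h') (sub_trans (sub_left hd') h'') sa₁ sb₁
    have e2 := ih₂ γ a₂ b₂ (sub_trans (sub_right hd) h') (sub_trans (sub_right hd') h'') sa₂ sb₂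
    rw [e1, e2]
end

section
/- The frame rule is sound for local programs: if the Hoare triple {φ} R {ψ} is valid (i.e., for every configuration γ satisfying φ, the set of successors ⟦R⟧(γ) is contained in the models of ψ), R is a local program, and the modified variables of R are disjoint from the free variables of the frame formula F, then the Hoare triple {φ ∗ F} R {ψ ∗ F} is valid. -/
open Config

variable {Q P : Type} [DecidableEq P]

/-- Composition lifted to sets of configurations. -/
def compSet (S T : Set (Config Q P)) : Set (Config Q P) :=
  {γ | ∃ a ∈ S, ∃ b ∈ T, Defined a b ∧ γ = comp a b}

/-- `lift S X`: closure of `S` under arbitrary reassignment of the store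
on the variables in `X`. -/
def lift (S : Set (Config Q P)) (X : Set ℕ) : Set (Config Q P) :=
  {γ' | ∃ γ ∈ S, γ'.C = γ.C ∧ γ'.I = γ.I ∧ γ'.ρ = γ.ρ ∧
    ∀ v ∉ X, γ'.ν v = γ.ν v}

/-- Program semantics: a program maps a configuration to either the error
`⊤` (encoded `none`) or a set of successor configurations. -/
abbrev Sem (Q P : Type) := Config Q P → Option (Set (Config Q P))

/-- Inclusion of results, where the error `⊤` (= `none`) is the top element. -/
def RLE : Option (Set (Config Q P)) → Option (Set (Config Q P)) → Prop
  | _, none => True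
  | none, some _ => False
  | some S, some T => S ⊆ T

/-- Compose a possibly-erroneous result with a set of frames; `⊤` absorbs. -/
def ocomp : Option (Set (Config Q P)) → Set (Config Q P) → Option (Set (Config Q P))
  | none, _ => none
  | some S, T => some (compSet S T)

/-- `R` is local: `⟦R⟧(γ₁ • γ₂) ⊆ ⟦R⟧(γ₁) • lift({γ₂}, mod(R))`. -/
def IsLocal (sem : Sem Q P) (mods : Set ℕ) : Prop :=
  ∀ γ₁ γ₂, Defined γ₁ γ₂ →
    RLE (sem (comp γ₁ γ₂)) (ocomp (sem γ₁) (lift {γ₂} mods))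

/-- Validity of the Hoare triple `{φ} R {ψ}`: no error, and all successors
of models of `φ` satisfy `ψ`. -/
def Valid (φ : Config Q P → Prop) (sem : Sem Q P) (ψ : Config Q P → Prop) : Prop :=
  ∀ γ, φ γ → ∃ S, sem γ = some S ∧ ∀ γ' ∈ S, ψ γ'

/-- Separated conjunction of (semantic) formulas. -/
def SepSat (φ₁ φ₂ : Config Q P → Prop) (γ : Config Q P) : Prop :=
  ∃ γ₁ γ₂, Defined γ₁ γ₂ ∧ γ = comp γ₁ γ₂ ∧ φ₁ γ₁ ∧ φ₂ γ₂

theorem frame_rule_sound (sem : Sem Q P) (mods : Set ℕ)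
    (φ ψ F : Config Q P → Prop)
    (hvalid : Valid φ sem ψ) (hlocal : IsLocal sem mods)
    (hframe : ∀ γ γ' : Config Q P, γ' ∈ lift {γ} mods → F γ → F γ') :
    Valid (SepSat φ F) sem (SepSat ψ F) := by
  rintro γ ⟨γ₁, γ₂, hdef, rfl, hφ, hF⟩
  obtain ⟨S, hS, hSub⟩ := hvalid γ₁ hφ
  have h := hlocal γ₁ γ₂ hdef
  rw [hS] at h
  cases hT : sem (comp γ₁ γ₂) with
  | none => rw [hT] at h; exact absurd h (by simp [RLE, ocomp])
  | some T =>
    refine ⟨T, rfl, ?_⟩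
    rw [hT] at h
    intro γ' hγ'
    obtain ⟨a, ha, b, hb, hab, rfl⟩ := h hγ'
    exact ⟨a, b, hab, rfl, hSub a ha, hframe γ₂ b hb hF⟩
end

section
/- The primitive command connect(x₁.p₁, x₂.p₂) is local: for all composable configurations γ₁ and γ₂ with common store ν, ⟦connect(x₁.p₁, x₂.p₂)⟧(γ₁ • γ₂) ⊆ ⟦connect(x₁.p₁, x₂.p₂)⟧(γ₁) • {γ₂}, where ⟦connect⟧(C, I, ρ, ν) = {(C, I ∪ {(ν(x₁), p₁, ν(x₂), p₂)}, ρ, ν)} provided (ν(x₁), p₁, ν(x₂), p₂) ∉ I (and the composition on the right requires disjointness of interaction sets). -/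
open Config

variable {Q P : Type} [DecidableEq P]

/-- Semantics of `connect(x₁.p₁, x₂.p₂)` (assuming the added interaction is
not already present): add the interaction `(ν(x₁), p₁, ν(x₂), p₂)`. -/
def connSem (x₁ : ℕ) (p₁ : P) (x₂ : ℕ) (p₂ : P) (γ : Config Q P) :
    Set (Config Q P) :=
  {γ' | γ'.C = γ.C ∧ γ'.I = insert (γ.ν x₁, p₁, γ.ν x₂, p₂) γ.I ∧
    γ'.ρ = γ.ρ ∧ γ'.ν = γ.ν}

attribute [ext] Config

namespace Config

def addInteraction (γ : Config Q P) (t : ℕ × P × ℕ × P) : Config Q P :=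
  { γ with I := insert t γ.I }

theorem mem_connSem_iff {x₁ : ℕ} {p₁ : P} {x₂ : ℕ} {p₂ : P} {γ γ' : Config Q P} :
    γ' ∈ connSem x₁ p₁ x₂ p₂ γ ↔ γ' = γ.addInteraction (γ.ν x₁, p₁, γ.ν x₂, p₂) := by
  constructor
  · rintro ⟨hC, hI, hρ, hν⟩
    ext1 <;> assumption
  · rintro rfl
    exact ⟨rfl, rfl, rfl, rfl⟩

theorem comp_addInteraction (γ₁ γ₂ : Config Q P) (t : ℕ × P × ℕ × P) :
    comp (γ₁.addInteraction t) γ₂ = (comp γ₁ γ₂).addInteraction t := by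
  ext1
  exacts [rfl, Finset.insert_union t γ₁.I γ₂.I, rfl, rfl]

theorem Defined.addInteraction {γ₁ γ₂ : Config Q P} (hD : Defined γ₁ γ₂)
    {t : ℕ × P × ℕ × P} (ht : t ∉ γ₂.I) : Defined (γ₁.addInteraction t) γ₂ :=
  ⟨hD.1, hD.2.1, Finset.disjoint_insert_left.2 ⟨ht, hD.2.2⟩⟩

end Config

theorem connect_local_general (x₁ : ℕ) (p₁ : P) (x₂ : ℕ) (p₂ : P)
    (γ₁ γ₂ : Config Q P) (hD : Defined γ₁ γ₂)
    (h₂ : (γ₁.ν x₁, p₁, γ₁.ν x₂, p₂) ∉ γ₂.I) :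
    connSem x₁ p₁ x₂ p₂ (comp γ₁ γ₂) ⊆
      compSet (connSem x₁ p₁ x₂ p₂ γ₁) {γ₂} := by
  intro γ' hγ'
  obtain rfl := mem_connSem_iff.1 hγ'
  exact ⟨_, mem_connSem_iff.2 rfl, γ₂, rfl, hD.addInteraction h₂,
    (comp_addInteraction γ₁ γ₂ _).symm⟩

theorem connect_local (x₁ : ℕ) (p₁ : P) (x₂ : ℕ) (p₂ : P)
    (γ₁ γ₂ : Config Q P) (hD : Defined γ₁ γ₂)
    (h₁ : (γ₁.ν x₁, p₁, γ₁.ν x₂, p₂) ∉ γ₁.I)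
    (h₂ : (γ₁.ν x₁, p₁, γ₁.ν x₂, p₂) ∉ γ₂.I) :
    connSem x₁ p₁ x₂ p₂ (comp γ₁ γ₂) ⊆
      compSet (connSem x₁ p₁ x₂ p₂ γ₁) {γ₂} :=
  connect_local_general x₁ p₁ x₂ p₂ γ₁ γ₂ hD h₂
end

section
/- Sequential composition preserves locality: if programs R₁ and R₂ are local and the lifted-set semantics satisfies ⟦R⟧(S) = ⋃_{γ∈S} ⟦R⟧(γ), then R₁ ; R₂ with ⟦R₁ ; R₂⟧(γ) = ⟦R₂⟧(⟦R₁⟧(γ)) and mod(R₁ ; R₂) = mod(R₁) ∪ mod(R₂) is local. -/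
open Config

variable {Q P : Type} [DecidableEq P]

-- Sequential composition of semantics; the error (top) propagates.
open Classical in
noncomputable def oseq (f g : Sem Q P) (γ : Config Q P) :
    Option (Set (Config Q P)) :=
  match f γ with
  | none => none
  | some S =>
    if ∀ γ' ∈ S, g γ' ≠ none then
      some {γ'' | ∃ γ' ∈ S, ∃ T, g γ' = some T ∧ γ'' ∈ T}
    else none

theorem seq_local (f g : Sem Q P) (m₁ m₂ : Set ℕ)
    (hf : IsLocal f m₁) (hg : IsLocal g m₂) :
    IsLocal (oseq f g) (m₁ ∪ m₂) := by
  intro γ₁ γ₂ hd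
  cases hf1 : f γ₁ with
  | none => simp [oseq, hf1, ocomp, RLE]
  | some S₁ =>
    by_cases hok : ∀ γ' ∈ S₁, g γ' ≠ none
    · have hloc := hf γ₁ γ₂ hd
      rw [hf1] at hloc
      cases hfc : f (comp γ₁ γ₂) with
      | none => rw [hfc] at hloc; exact absurd hloc (by simp [RLE, ocomp])
      | some S =>
        rw [hfc] at hloc
        have hS : S ⊆ compSet S₁ (lift {γ₂} m₁) := hloc
        set U : Set (Config Q P) :=
          {γ'' | ∃ γ' ∈ S₁, ∃ T', g γ' = some T' ∧ γ'' ∈ T'} with hU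
        have key : ∀ δ ∈ S, ∃ T, g δ = some T ∧
            T ⊆ compSet U (lift {γ₂} (m₁ ∪ m₂)) := by
          intro δ hδ
          obtain ⟨a, ha, b, hb, hab, rfl⟩ := hS hδ
          cases hga' : g a with
          | none => exact absurd hga' (hok a ha)
          | some Ta =>
            have hloc2 := hg a b hab
            rw [hga'] at hloc2
            cases hgc : g (comp a b) with
            | none => rw [hgc] at hloc2; exact absurd hloc2 (by simp [RLE, ocomp])
            | some T =>
              rw [hgc] at hloc2
              refine ⟨T, rfl, ?_⟩
              intro x hx
              obtain ⟨u, hu, v, hv, huv, rfl⟩ := hloc2 hx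
              refine ⟨u, ⟨a, ha, Ta, hga', hu⟩, v, ?_, huv, rfl⟩
              obtain ⟨b', hb', hC, hI, hρ, hν⟩ := hv
              rw [Set.mem_singleton_iff] at hb'
              subst hb'
              obtain ⟨g2, hg2, hC2, hI2, hρ2, hν2⟩ := hb
              rw [Set.mem_singleton_iff] at hg2
              subst hg2
              refine ⟨_, rfl, hC.trans hC2, hI.trans hI2, hρ.trans hρ2, ?_⟩
              intro w hw
              rw [Set.mem_union] at hw
              push_neg at hw
              rw [hν w hw.2, hν2 w hw.1]
        have hokc : ∀ δ ∈ S, g δ ≠ none := by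
          intro δ hδ
          obtain ⟨T, hT, _⟩ := key δ hδ
          simp [hT]
        simp only [oseq, hfc, hf1, if_pos hok, if_pos hokc, ocomp]
        intro x hx
        obtain ⟨δ, hδ, T, hT, hxT⟩ := hx
        obtain ⟨T', hT', hsub⟩ := key δ hδ
        rw [hT] at hT'
        exact hsub (by rw [Option.some_inj] at hT'; exact hT' ▸ hxT)
    · have : oseq f g γ₁ = none := by simp [oseq, hf1, if_neg hok]
      rw [this]
      cases oseq f g (comp γ₁ γ₂) <;> simp [ocomp, RLE]
end

section
/- Havoc invariance is preserved by separated conjunction when interactions are split: if φ₁ and φ₂ are havoc invariant formulas, then φ₁ ∗ φ₂ is havoc invariant, assuming that whenever γ = γ₁ • γ₂ with γᵢ ⊨ φᵢ, every interaction of γ occurring in the havoc sequence belongs to exactly one of γ₁, γ₂, and executing an interaction of γᵢ only changes the states of components of γᵢ. -/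
open Config

variable {Q P : Type} [DecidableEq P]

/-- A state change firing the interaction `i = (c₁, p₁, c₂, p₂) ∈ I`:
components, interactions and store are unchanged, and the state map changes
at most on the two endpoints `c₁`, `c₂`. -/
def StateChangeAt (i : ℕ × P × ℕ × P) (γ γ' : Config Q P) : Prop :=
  i ∈ γ.I ∧ γ'.C = γ.C ∧ γ'.I = γ.I ∧ γ'.ν = γ.ν ∧
    ∀ c, c ≠ i.1 → c ≠ i.2.2.1 → γ'.ρ c = γ.ρ c

/-- A state change firing some interaction of `γ`. -/
def StateChange (γ γ' : Config Q P) : Prop := ∃ i, StateChangeAt i γ γ'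

/-- `φ` is havoc invariant: preserved by any finite sequence of state changes. -/
def HavocInv (φ : Config Q P → Prop) : Prop :=
  ∀ γ γ', φ γ → Relation.ReflTransGen StateChange γ γ' → φ γ'

/-- All interactions of `γ` are tight: both endpoints are components of `γ`. -/
def Tight (γ : Config Q P) : Prop :=
  ∀ i ∈ γ.I, i.1 ∈ γ.C ∧ i.2.2.1 ∈ γ.C

lemma Config.eq_of_fields {Q P : Type} {γ γ' : Config Q P}
    (hC : γ.C = γ'.C) (hI : γ.I = γ'.I) (hρ : γ.ρ = γ'.ρ) (hν : γ.ν = γ'.ν) :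
    γ = γ' := by
  cases γ; cases γ'; simp_all

lemma sep_step (φ₁ φ₂ : Config Q P → Prop)
    (h₁ : HavocInv φ₁) (h₂ : HavocInv φ₂)
    (htight : ∀ γ₁ γ₂ : Config Q P, Defined γ₁ γ₂ → φ₁ γ₁ → φ₂ γ₂ →
      Tight γ₁ ∧ Tight γ₂)
    {γ γ' : Config Q P} (hs : SepSat φ₁ φ₂ γ) (hc : StateChange γ γ') :
    SepSat φ₁ φ₂ γ' := by
  obtain ⟨γ₁, γ₂, hd, rfl, hφ1, hφ2⟩ := hs
  obtain ⟨i, hi, hC, hI, hν, hρ⟩ := hc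
  obtain ⟨hνeq, hdC, hdI⟩ := hd
  have hiU : i ∈ γ₁.I ∪ γ₂.I := hi
  have hCU : γ'.C = γ₁.C ∪ γ₂.C := hC
  rcases Finset.mem_union.mp hiU with h1 | h2
  · -- interaction of γ₁
    have htg := (htight γ₁ γ₂ ⟨hνeq, hdC, hdI⟩ hφ1 hφ2).1 i h1
    refine ⟨{ C := γ₁.C, I := γ₁.I,
              ρ := fun c => if c ∈ γ₁.C then γ'.ρ c else none,
              ν := γ₁.ν,
              dom := by
                intro c
                by_cases h : c ∈ γ₁.C <;> simp [h]
                exact (γ'.dom c).mpr (hCU ▸ Finset.mem_union_left _ h) },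
            γ₂, ⟨hνeq, hdC, hdI⟩, ?_, ?_, hφ2⟩
    · symm
      apply Config.eq_of_fields
      · exact hCU.symm
      · exact hI.symm
      · funext c
        show (if c ∈ γ₁.C then (if c ∈ γ₁.C then γ'.ρ c else none) else γ₂.ρ c)
          = γ'.ρ c
        by_cases h : c ∈ γ₁.C
        · simp [h]
        · simp only [h, if_false]
          have hne1 : c ≠ i.1 := fun he => h (he ▸ htg.1)
          have hne2 : c ≠ i.2.2.1 := fun he => h (he ▸ htg.2)
          have := hρ c hne1 hne2
          simp only [comp, h, if_false] at this
          exact this.symm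
      · exact hν.symm
    · apply h₁ γ₁ _ hφ1
      refine Relation.ReflTransGen.single ⟨i, h1, rfl, rfl, rfl, ?_⟩
      intro c hne1 hne2
      by_cases h : c ∈ γ₁.C
      · simp only [h, if_true]
        have := hρ c hne1 hne2
        simp only [comp, h, if_true] at this
        exact this
      · simp only [h, if_false]
        exact (Option.not_isSome_iff_eq_none.mp
          (fun hs => h ((γ₁.dom c).mp hs))).symm
  · -- interaction of γ₂
    have htg := (htight γ₁ γ₂ ⟨hνeq, hdC, hdI⟩ hφ1 hφ2).2 i h2
    refine ⟨γ₁,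
            { C := γ₂.C, I := γ₂.I,
              ρ := fun c => if c ∈ γ₂.C then γ'.ρ c else none,
              ν := γ₂.ν,
              dom := by
                intro c
                by_cases h : c ∈ γ₂.C <;> simp [h]
                exact (γ'.dom c).mpr (hCU ▸ Finset.mem_union_right _ h) },
            ⟨hνeq, hdC, hdI⟩, ?_, hφ1, ?_⟩
    · symm
      apply Config.eq_of_fields
      · exact hCU.symm
      · exact hI.symm
      · funext c
        show (if c ∈ γ₁.C then γ₁.ρ c
              else (if c ∈ γ₂.C then γ'.ρ c else none)) = γ'.ρ c
        by_cases h : c ∈ γ₁.C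
        · simp only [h, if_true]
          have hne1 : c ≠ i.1 := fun he =>
            Finset.disjoint_left.mp hdC h (he ▸ htg.1)
          have hne2 : c ≠ i.2.2.1 := fun he =>
            Finset.disjoint_left.mp hdC h (he ▸ htg.2)
          have := hρ c hne1 hne2
          simp only [comp, h, if_true] at this
          exact this.symm
        · simp only [h, if_false]
          by_cases h2' : c ∈ γ₂.C
          · simp [h2']
          · simp only [h2', if_false]
            refine (Option.not_isSome_iff_eq_none.mp
              (fun hs => ?_)).symm
            have := (γ'.dom c).mp hs
            rw [hCU] at this
            rcases Finset.mem_union.mp this with h' | h' <;> tauto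
      · exact hν.symm
    · apply h₂ γ₂ _ hφ2
      refine Relation.ReflTransGen.single ⟨i, h2, rfl, rfl, rfl, ?_⟩
      intro c hne1 hne2
      by_cases h : c ∈ γ₂.C
      · simp only [h, if_true]
        have h1' : c ∉ γ₁.C := Finset.disjoint_right.mp hdC h
        have := hρ c hne1 hne2
        simp only [comp, h1', if_false] at this
        exact this
      · simp only [h, if_false]
        exact (Option.not_isSome_iff_eq_none.mp
          (fun hs => h ((γ₂.dom c).mp hs))).symm

theorem havoc_inv_sep (φ₁ φ₂ : Config Q P → Prop)
    (h₁ : HavocInv φ₁) (h₂ : HavocInv φ₂)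
    (htight : ∀ γ₁ γ₂ : Config Q P, Defined γ₁ γ₂ → φ₁ γ₁ → φ₂ γ₂ →
      Tight γ₁ ∧ Tight γ₂) :
    HavocInv (SepSat φ₁ φ₂) := by
  intro γ γ' hs h
  induction h with
  | refl => exact hs
  | tail _ hstep ih => exact sep_step φ₁ φ₂ h₁ h₂ htight ih hstep
end

section
/- If γ → γ' is a state change of configuration γ = (C, I, ρ, ν) firing an interaction (c₁, p₁, c₂, p₂) ∈ I₁ of a decomposition γ = γ₁ • γ₂ where the interaction is tight in γ₁ (both c₁, c₂ ∈ C₁), then γ' decomposes as γ₁' • γ₂ where γ₁' is a state change of γ₁ firing the same interaction and γ₂ is unchanged. -/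
open Config

variable {Q P : Type} [DecidableEq P]

theorem state_change_decomp (γ₁ γ₂ γ' : Config Q P) (i : ℕ × P × ℕ × P)
    (hD : Defined γ₁ γ₂) (hi : i ∈ γ₁.I)
    (hc₁ : i.1 ∈ γ₁.C) (hc₂ : i.2.2.1 ∈ γ₁.C)
    (hsc : StateChangeAt i (comp γ₁ γ₂) γ') :
    ∃ γ₁' : Config Q P,
      StateChangeAt i γ₁ γ₁' ∧ Defined γ₁' γ₂ ∧ γ' = comp γ₁' γ₂ := by
  obtain ⟨hiI, hC, hI, hν, hρ⟩ := hsc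
  refine ⟨⟨γ₁.C, γ₁.I, fun c => if c ∈ γ₁.C then γ'.ρ c else none, γ₁.ν, ?_⟩, ?_, ?_, ?_⟩
  · intro c
    by_cases h : c ∈ γ₁.C <;> simp [h]
    rw [γ'.dom]
    simp [hC, comp, h]
  · refine ⟨hi, rfl, rfl, rfl, ?_⟩
    intro c h1 h2
    by_cases h : c ∈ γ₁.C <;> simp [h]
    · rw [hρ c h1 h2]; simp [comp, h]
    · symm; rw [← Option.not_isSome_iff_eq_none, γ₁.dom]; exact h
  · exact ⟨hD.1, hD.2.1, hD.2.2⟩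
  · obtain ⟨c', i', r', n', d'⟩ := γ'
    simp only [comp, Config.mk.injEq]
    refine ⟨?_, ?_, ?_, hν⟩
    · simpa [comp] using hC
    · simpa [comp] using hI
    · funext c
      by_cases h : c ∈ γ₁.C <;> simp [h]
      by_cases h1 : c = i.1
      · exact absurd (h1 ▸ hc₁) h
      by_cases h2 : c = i.2.2.1
      · exact absurd (h2 ▸ hc₂) h
      · have := hρ c h1 h2; simp [comp, h] at this; exact this
end
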